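/- For 0 < ε < 1, the set K = {(x_n) ∈ c_0 : |x_n| ≤ ε^n for all n} satisfies: there exist positive constants C_1, C_2 such that C_1·s^{√(n-1)} ≤ e_n(K) ≤ C_2·S^{√(n-1)} for all n, where s = min{ε,1/2} and S = max{ε,1/2}. In particular, the sequence (e_n(K))_n belongs to ℓ_1. -/

import Mathlib

/-!
Write `N = n - 1` and `q = ⌊√N⌋`. For the upper bound, approximate the first `q` coordinates by
complex grids whose sizes decrease geometrically (`4^(q-1-i)` points for coordinate `i`, mesh
`4 S^(q+1)`) and set all later coordinates to `0`; since `S ≥ 1/2` the grids are fine enough, and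
there are `2^(q(q-1)) ≤ 2^N` centres. For the lower bound, the same kind of grids in the first
`q + 2` coordinates, with mesh `s^(q+2)`, give more than `2^N` points of `K` that are pairwise
`s^(q+2)`-apart, so by pigeonhole no `2^N` balls of radius `s^(q+2)/2` cover `K`. Finally
`S^√N = exp(-L√N) = O(N⁻²)`, which gives summability.
-/

open Filter Metric Set Topology

/-- The `n`-th dyadic entropy number of a set `L` in a metric space: the infimum of
radii `ε > 0` such that `L` can be covered by `2^(n-1)` balls of radius `ε`. -/
noncomputable def entropyNum {X : Type*} [MetricSpace X] (n : ℕ) (L : Set X) : ℝ :=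
  sInf {ε : ℝ | 0 < ε ∧ ∃ s : Finset X, s.card ≤ 2 ^ (n - 1) ∧ L ⊆ ⋃ x ∈ s, Metric.ball x ε}

/-- The covering number `N(L, ε)`: minimal number of `ε`-balls needed to cover `L`. -/
noncomputable def coveringNum {X : Type*} [MetricSpace X] (L : Set X) (ε : ℝ) : ℕ :=
  sInf {n : ℕ | ∃ s : Finset X, s.card = n ∧ L ⊆ ⋃ x ∈ s, Metric.ball x ε}

/-- The upper box (counting) dimension of `L`. -/
noncomputable def upperBoxDim {X : Type*} [MetricSpace X] (L : Set X) : EReal :=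
  Filter.limsup (fun ε : ℝ => ((Real.log (coveringNum L ε) / (-Real.log ε) : ℝ) : EReal)) (𝓝[>] 0)

/-- The lower box (counting) dimension of `L`. -/
noncomputable def lowerBoxDim {X : Type*} [MetricSpace X] (L : Set X) : EReal :=
  Filter.liminf (fun ε : ℝ => ((Real.log (coveringNum L ε) / (-Real.log ε) : ℝ) : EReal)) (𝓝[>] 0)

section EntropyNumbers

variable {X : Type*} [MetricSpace X] {n : ℕ} {L : Set X}

lemma entropyNum_nonneg (n : ℕ) (L : Set X) : 0 ≤ entropyNum n L :=
  Real.sInf_nonneg fun _ hr => hr.1.le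

lemma entropyNum_le_of_subset_iUnion_ball {r : ℝ} (hr : 0 < r) (s : Finset X)
    (hs : s.card ≤ 2 ^ (n - 1)) (hL : L ⊆ ⋃ x ∈ s, ball x r) : entropyNum n L ≤ r :=
  csInf_le ⟨0, fun _ hr => hr.1.le⟩ ⟨hr, s, hs, hL⟩

lemma le_entropyNum_of_pairwise_le_dist (hL : Bornology.IsBounded L) {δ : ℝ} (P : Finset X)
    (hPL : ↑P ⊆ L) (hP : 2 ^ (n - 1) < P.card)
    (hsep : (P : Set X).Pairwise fun x y => δ ≤ dist x y) : δ / 2 ≤ entropyNum n L := by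
  obtain ⟨c, -⟩ : P.Nonempty := Finset.card_pos.1 ((Nat.zero_le _).trans_lt hP)
  obtain ⟨r, hr, hLr⟩ := hL.subset_ball_lt 0 c
  refine le_csInf ⟨r, hr, {c}, by simp [Nat.one_le_two_pow], by simpa using hLr⟩ ?_
  rintro ρ ⟨-, t, ht, hLt⟩
  have hcenter : ∀ x ∈ P, ∃ y, y ∈ t ∧ x ∈ ball y ρ := fun x hx => by
    simpa using hLt (hPL hx)
  choose! f hft hf using hcenter
  obtain ⟨x, hx, x', hx', hne, hfx⟩ :=
    Finset.exists_ne_map_eq_of_card_lt_of_maps_to (ht.trans_lt hP) hft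
  have hfx' := mem_ball.1 (hf x' hx')
  rw [← hfx] at hfx'
  have : δ < ρ + ρ := calc
    δ ≤ dist x x' := hsep hx hx' hne
    _ ≤ dist x (f x) + dist x' (f x) := dist_triangle_right x x' (f x)
    _ < ρ + ρ := add_lt_add (mem_ball.1 (hf x hx)) hfx'
  linarith

end EntropyNumbers

namespace ZeroAtInftyContinuousMap

open ZeroAtInfty

variable {E : Type*} [NormedAddCommGroup E]

lemma norm_apply_le_norm (f : C₀(ℕ, E)) (i : ℕ) : ‖f i‖ ≤ ‖f‖ :=
  f.toBCF.norm_coe_le_norm i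

lemma norm_le_of_forall_norm_apply_le {f : C₀(ℕ, E)} {C : ℝ} (hC : 0 ≤ C)
    (h : ∀ i, ‖f i‖ ≤ C) : ‖f‖ ≤ C :=
  (BoundedContinuousFunction.norm_le hC).2 h

def extendByZero {m : ℕ} (p : Fin m → E) : C₀(ℕ, E) where
  toFun i := if h : i < m then p ⟨i, h⟩ else 0
  continuous_toFun := continuous_of_discreteTopology
  zero_at_infty' := by
    rw [cocompact_eq_atTop]
    refine tendsto_const_nhds.congr' ?_
    filter_upwards [eventually_ge_atTop m] with i hi
    simp [Nat.not_lt.2 hi]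

lemma extendByZero_apply_of_lt {m : ℕ} (p : Fin m → E) {i : ℕ} (hi : i < m) :
    extendByZero p i = p ⟨i, hi⟩ :=
  dif_pos hi

lemma extendByZero_apply_of_le {m : ℕ} (p : Fin m → E) {i : ℕ} (hi : m ≤ i) :
    extendByZero p i = 0 :=
  dif_neg (Nat.not_lt.2 hi)

lemma extendByZero_apply_fin {m : ℕ} (p : Fin m → E) (i : Fin m) : extendByZero p i = p i :=
  extendByZero_apply_of_lt p i.isLt

lemma extendByZero_injective (m : ℕ) : Function.Injective (extendByZero (E := E) (m := m)) :=
  fun p p' h => funext fun i => by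
    simpa [extendByZero_apply_fin] using DFunLike.congr_fun h (i : ℕ)

def coordBox (a : ℕ → ℝ) : Set C₀(ℕ, E) := {x | ∀ i, ‖x i‖ ≤ a i}

lemma isBounded_coordBox {a : ℕ → ℝ} {C : ℝ} (ha : ∀ i, a i ≤ C) :
    Bornology.IsBounded (coordBox (E := E) a) := by
  refine (isBounded_iff_subset_closedBall 0).2 ⟨max C 0, fun x hx => ?_⟩
  rw [mem_closedBall_zero_iff]
  exact norm_le_of_forall_norm_apply_le (le_max_right C 0)
    fun i => (hx i).trans ((ha i).trans (le_max_left C 0))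

lemma exists_finset_coordBox_subset_iUnion_ball {a : ℕ → ℝ} {m : ℕ} {h r : ℝ} (hh : 0 ≤ h)
    (hr : h < r) (G : Fin m → Finset E)
    (hG : ∀ i : Fin m, ∀ z : E, ‖z‖ ≤ a i → ∃ w ∈ G i, ‖z - w‖ ≤ h)
    (htail : ∀ i, m ≤ i → a i ≤ h) :
    ∃ s : Finset C₀(ℕ, E), s.card ≤ ∏ i, (G i).card ∧ coordBox a ⊆ ⋃ y ∈ s, ball y r := by
  classical
  refine ⟨(Fintype.piFinset G).image extendByZero, Finset.card_image_le.trans_eq (by simp), ?_⟩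
  intro x hx
  choose w hwG hw using fun i : Fin m => hG i (x i) (hx i)
  refine mem_iUnion₂.2 ⟨extendByZero w, Finset.mem_image_of_mem _ (Fintype.mem_piFinset.2 hwG), ?_⟩
  rw [mem_ball, dist_eq_norm]
  refine (norm_le_of_forall_norm_apply_le hh fun i => ?_).trans_lt hr
  rcases lt_or_ge i m with hi | hi
  · simpa [extendByZero_apply_of_lt w hi] using hw ⟨i, hi⟩
  · simpa [extendByZero_apply_of_le w hi] using (hx i).trans (htail i hi)

lemma exists_finset_subset_coordBox_pairwise_le_dist {a : ℕ → ℝ} {m : ℕ} {δ : ℝ}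
    (Q : Fin m → Finset E) (hQ : ∀ i : Fin m, ∀ w ∈ Q i, ‖w‖ ≤ a i)
    (hQsep : ∀ i, (Q i : Set E).Pairwise fun w w' => δ ≤ ‖w - w'‖) (htail : ∀ i, m ≤ i → 0 ≤ a i) :
    ∃ P : Finset C₀(ℕ, E), P.card = ∏ i, (Q i).card ∧ (P : Set C₀(ℕ, E)) ⊆ coordBox a ∧
      (P : Set C₀(ℕ, E)).Pairwise fun x y => δ ≤ dist x y := by
  classical
  refine ⟨(Fintype.piFinset Q).image extendByZero, ?_, ?_, ?_⟩
  · rw [Finset.card_image_of_injective _ (extendByZero_injective m), Fintype.card_piFinset]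
  · simp only [Finset.coe_image, image_subset_iff]
    intro p hp i
    rcases lt_or_ge i m with hi | hi
    · simpa [extendByZero_apply_of_lt p hi] using hQ ⟨i, hi⟩ _ (Fintype.mem_piFinset.1 hp _)
    · simpa [extendByZero_apply_of_le p hi] using htail i hi
  · simp only [Finset.coe_image, Set.Pairwise, mem_image, Finset.mem_coe]
    rintro _ ⟨p, hp, rfl⟩ _ ⟨p', hp', rfl⟩ hne
    obtain ⟨i, hi⟩ : ∃ i, p i ≠ p' i := Function.ne_iff.1 fun h => hne (congrArg _ h)
    calc δ ≤ ‖p i - p' i‖ :=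
          hQsep i (Fintype.mem_piFinset.1 hp i) (Fintype.mem_piFinset.1 hp' i) hi
      _ = ‖(extendByZero p - extendByZero p') i‖ := by simp [extendByZero_apply_fin]
      _ ≤ dist (extendByZero p) (extendByZero p') := by
          rw [dist_eq_norm]; exact norm_apply_le_norm _ _

end ZeroAtInftyContinuousMap

noncomputable def gridPoints (h : ℝ) (c : ℕ) : Finset ℝ :=
  (Finset.range c).image fun j : ℕ => h * (j - (c - 1) / 2)

lemma card_gridPoints {h : ℝ} (hh : h ≠ 0) (c : ℕ) : (gridPoints h c).card = c := by
  rw [gridPoints, Finset.card_image_of_injective _ fun j j' hjj' => ?_, Finset.card_range]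
  simpa [hh] using hjj'

lemma abs_le_of_mem_gridPoints {h : ℝ} (hh : 0 ≤ h) {c : ℕ} {t : ℝ}
    (ht : t ∈ gridPoints h c) : |t| ≤ c * h / 2 := by
  obtain ⟨j, hj, rfl⟩ := Finset.mem_image.1 ht
  have hj : (j : ℝ) + 1 ≤ c := by exact_mod_cast Finset.mem_range.1 hj
  rw [abs_mul, abs_of_nonneg hh, mul_comm (c : ℝ), mul_div_assoc]
  exact mul_le_mul_of_nonneg_left (abs_le.2 ⟨by linarith, by linarith⟩) hh

lemma le_abs_sub_of_mem_gridPoints {h : ℝ} (hh : 0 ≤ h) {c : ℕ} {t t' : ℝ}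
    (ht : t ∈ gridPoints h c) (ht' : t' ∈ gridPoints h c) (hne : t ≠ t') : h ≤ |t - t'| := by
  obtain ⟨j, -, rfl⟩ := Finset.mem_image.1 ht
  obtain ⟨j', -, rfl⟩ := Finset.mem_image.1 ht'
  have hjj' : j ≠ j' := by rintro rfl; exact hne rfl
  rw [← mul_sub, sub_sub_sub_cancel_right, abs_mul, abs_of_nonneg hh]
  refine le_mul_of_one_le_right hh ?_
  rcases hjj'.lt_or_gt with hlt | hlt
  · have : (j : ℝ) + 1 ≤ j' := by exact_mod_cast hlt
    rw [abs_sub_comm, abs_of_nonneg (by linarith)]; linarith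
  · have : (j' : ℝ) + 1 ≤ j := by exact_mod_cast hlt
    rw [abs_of_nonneg (by linarith)]; linarith

lemma exists_mem_gridPoints_abs_sub_le {h : ℝ} (hh : 0 < h) {c : ℕ} (hc : c ≠ 0) {t : ℝ}
    (ht : |t| ≤ c * h / 2) : ∃ g ∈ gridPoints h c, |t - g| ≤ h / 2 := by
  -- `u` is the position of `t` measured from the left end of the grid, in units of `h`
  set u := t / h + c / 2
  have htu : t = h * (u - c / 2) := by simp only [u]; field_simp; ring
  obtain ⟨hu0, huc⟩ : 0 ≤ u ∧ u ≤ c := by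
    obtain ⟨h1, h2⟩ := abs_le.1 ht
    rw [htu] at h1 h2
    constructor <;> nlinarith
  obtain ⟨j, hjc, hju, huj⟩ : ∃ j : ℕ, j < c ∧ (j : ℝ) ≤ u ∧ u ≤ j + 1 := by
    rcases lt_or_ge ⌊u⌋₊ c with hlt | hge
    · exact ⟨⌊u⌋₊, hlt, Nat.floor_le hu0, (Nat.lt_floor_add_one u).le⟩
    · have hcu : (c : ℝ) ≤ u := (Nat.cast_le.2 hge).trans (Nat.floor_le hu0)
      refine ⟨c - 1, by omega, ?_, ?_⟩ <;> push_cast [Nat.one_le_iff_ne_zero.2 hc] <;> linarith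
  refine ⟨h * (j - (c - 1) / 2), Finset.mem_image_of_mem _ (Finset.mem_range.2 hjc), ?_⟩
  rw [htu, ← mul_sub, abs_mul, abs_of_pos hh, ← mul_one_div]
  exact mul_le_mul_of_nonneg_left (abs_le.2 ⟨by linarith, by linarith⟩) hh.le

noncomputable def complexGrid (h : ℝ) (c : ℕ) : Finset ℂ :=
  (gridPoints h c ×ˢ gridPoints h c).map Complex.equivRealProd.symm.toEmbedding

lemma mem_complexGrid {h : ℝ} {c : ℕ} {w : ℂ} :
    w ∈ complexGrid h c ↔ w.re ∈ gridPoints h c ∧ w.im ∈ gridPoints h c := by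
  simp [complexGrid, Finset.mem_map_equiv]

lemma card_complexGrid {h : ℝ} (hh : h ≠ 0) (c : ℕ) : (complexGrid h c).card = c ^ 2 := by
  simp [complexGrid, card_gridPoints hh, sq]

lemma norm_le_of_mem_complexGrid {h : ℝ} (hh : 0 ≤ h) {c : ℕ} {w : ℂ}
    (hw : w ∈ complexGrid h c) : ‖w‖ ≤ c * h := by
  obtain ⟨hre, him⟩ := mem_complexGrid.1 hw
  linarith [Complex.norm_le_abs_re_add_abs_im w, abs_le_of_mem_gridPoints hh hre,
    abs_le_of_mem_gridPoints hh him]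

lemma complexGrid_pairwise_le_norm_sub {h : ℝ} (hh : 0 ≤ h) (c : ℕ) :
    (complexGrid h c : Set ℂ).Pairwise fun w w' => h ≤ ‖w - w'‖ := by
  intro w hw w' hw' hne
  obtain ⟨hre, him⟩ := mem_complexGrid.1 hw
  obtain ⟨hre', him'⟩ := mem_complexGrid.1 hw'
  by_cases hre_eq : w.re = w'.re
  · have him_ne : w.im ≠ w'.im := fun him_eq => hne (Complex.ext hre_eq him_eq)
    simpa using (le_abs_sub_of_mem_gridPoints hh him him' him_ne).trans
      (Complex.abs_im_le_norm (w - w'))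
  · simpa using (le_abs_sub_of_mem_gridPoints hh hre hre' hre_eq).trans
      (Complex.abs_re_le_norm (w - w'))

lemma exists_mem_complexGrid_norm_sub_le {h : ℝ} (hh : 0 < h) {c : ℕ} (hc : c ≠ 0) {z : ℂ}
    (hz : ‖z‖ ≤ c * h / 2) : ∃ w ∈ complexGrid h c, ‖z - w‖ ≤ h := by
  obtain ⟨x, hx, hzx⟩ :=
    exists_mem_gridPoints_abs_sub_le hh hc ((Complex.abs_re_le_norm z).trans hz)
  obtain ⟨y, hy, hzy⟩ :=
    exists_mem_gridPoints_abs_sub_le hh hc ((Complex.abs_im_le_norm z).trans hz)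
  refine ⟨⟨x, y⟩, mem_complexGrid.2 ⟨hx, hy⟩, ?_⟩
  have := Complex.norm_le_abs_re_add_abs_im (z - ⟨x, y⟩)
  simp only [Complex.sub_re, Complex.sub_im] at this
  linarith

lemma prod_fin_two_pow_sq (m : ℕ) :
    ∏ i : Fin m, (2 ^ (m - (i + 1))) ^ 2 = 2 ^ (m * (m - 1)) := by
  rw [Fin.prod_univ_eq_prod_range (fun i => (2 ^ (m - (i + 1))) ^ 2) m]
  simp_rw [← pow_mul]
  rw [Finset.prod_pow_eq_pow_sum, ← Finset.sum_mul, ← Finset.sum_range_id_mul_two,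
    ← Finset.sum_range_reflect (fun i => i) m]
  congr 2
  exact Finset.sum_congr rfl fun i _ => by omega

lemma pow_le_two_pow_mul_pow {S : ℝ} (hS : 1 / 2 ≤ S) {k l : ℕ} (hkl : k ≤ l) :
    S ^ k ≤ 2 ^ (l - k) * S ^ l := by
  obtain ⟨d, rfl⟩ := Nat.exists_eq_add_of_le hkl
  calc S ^ k ≤ S ^ k * (2 * S) ^ d :=
        le_mul_of_one_le_right (by positivity) (one_le_pow₀ (by linarith))
    _ = 2 ^ (k + d - k) * S ^ (k + d) := by rw [Nat.add_sub_cancel_left, mul_pow, pow_add]; ring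

lemma two_pow_mul_pow_le {s : ℝ} (hs0 : 0 ≤ s) (hs : s ≤ 1 / 2) {k l : ℕ} (hkl : k ≤ l) :
    2 ^ (l - k) * s ^ l ≤ s ^ k := by
  obtain ⟨d, rfl⟩ := Nat.exists_eq_add_of_le hkl
  calc 2 ^ (k + d - k) * s ^ (k + d) = s ^ k * (2 * s) ^ d := by
        rw [Nat.add_sub_cancel_left, mul_pow, pow_add]; ring
    _ ≤ s ^ k := mul_le_of_le_one_right (by positivity) (pow_le_one₀ (by positivity) (by linarith))

lemma rpow_sqrt_le_pow_natSqrt {S : ℝ} (h0 : 0 ≤ S) (h1 : S ≤ 1) (N : ℕ) :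
    S ^ √(N : ℝ) ≤ S ^ Nat.sqrt N := by
  rw [← Real.rpow_natCast]
  exact Real.rpow_le_rpow_of_exponent_ge' h0 h1 (Nat.cast_nonneg _) Real.nat_sqrt_le_real_sqrt

lemma pow_natSqrt_succ_le_rpow_sqrt {S : ℝ} (h0 : 0 ≤ S) (h1 : S ≤ 1) (N : ℕ) :
    S ^ (Nat.sqrt N + 1) ≤ S ^ √(N : ℝ) := by
  rw [← Real.rpow_natCast]
  exact Real.rpow_le_rpow_of_exponent_ge' h0 h1 (Real.sqrt_nonneg _)
    (by push_cast; exact Real.real_sqrt_le_nat_sqrt_succ)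

/-- `S ^ √n = exp (-L √n) ≤ 4! / (L √n)⁴` with `L = -log S`, which is summable. -/
lemma summable_rpow_sqrt {S : ℝ} (h0 : 0 < S) (h1 : S < 1) :
    Summable fun n : ℕ => S ^ √(n : ℝ) := by
  set L := -Real.log S
  have hL : 0 < L := neg_pos.2 (Real.log_neg h0 h1)
  refine ((Real.summable_nat_pow_inv.2 one_lt_two).mul_left (24 / L ^ 4))
    |>.of_norm_bounded_eventually_nat ?_
  filter_upwards [eventually_ge_atTop 1] with n hn
  have hn : (0 : ℝ) < n := by exact_mod_cast hn
  have hexp : L ^ 4 * n ^ 2 / 24 ≤ Real.exp (L * √n) := by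
    have := Real.pow_div_factorial_le_exp _ (mul_nonneg hL.le (Real.sqrt_nonneg n)) 4
    rwa [mul_pow, show √(n : ℝ) ^ 4 = n ^ 2 by rw [show 4 = 2 * 2 by rfl, pow_mul,
      Real.sq_sqrt hn.le]] at this
  rw [Real.norm_of_nonneg (by positivity), Real.rpow_def_of_pos h0,
    show Real.log S * √n = -(L * √n) by ring, Real.exp_neg]
  calc (Real.exp (L * √n))⁻¹ ≤ (L ^ 4 * n ^ 2 / 24)⁻¹ := inv_anti₀ (by positivity) hexp
    _ = 24 / L ^ 4 * ((n : ℝ) ^ 2)⁻¹ := by field_simp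

open ZeroAtInftyContinuousMap

lemma entropyNum_coordBox_pow_le {ε S : ℝ} (hε : 0 ≤ ε) (hεS : ε ≤ S) (hS : 1 / 2 ≤ S)
    (hS1 : S ≤ 1) (N : ℕ) :
    entropyNum (N + 1) (coordBox (E := ℂ) fun i => ε ^ (i + 1)) ≤ 8 * S ^ (Nat.sqrt N + 1) := by
  set q := Nat.sqrt N
  set h := 4 * S ^ (q + 1)
  have hh : 0 < h := by positivity
  have hεS_pow (i : ℕ) : ε ^ (i + 1) ≤ S ^ (i + 1) := pow_le_pow_left₀ hε hεS _
  have hgrid (i : Fin q) : ε ^ ((i : ℕ) + 1) ≤ ((2 ^ (q - (i + 1)) : ℕ) : ℝ) * h / 2 := by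
    have hiq : (i : ℕ) + 1 ≤ q := i.isLt
    calc ε ^ ((i : ℕ) + 1) ≤ 2 ^ (q + 1 - (i + 1)) * S ^ (q + 1) :=
          (hεS_pow i).trans (pow_le_two_pow_mul_pow hS (by omega))
      _ = ((2 ^ (q - (i + 1)) : ℕ) : ℝ) * h / 2 := by
          rw [show q + 1 - (i + 1) = q - (i + 1) + 1 by omega, pow_succ]; push_cast; ring
  have htail (i : ℕ) (hi : q ≤ i) : ε ^ (i + 1) ≤ h :=
    calc ε ^ (i + 1) ≤ S ^ (i + 1) := hεS_pow i
      _ ≤ S ^ (q + 1) := pow_le_pow_of_le_one (by positivity) hS1 (by omega)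
      _ ≤ h := by linarith [pow_pos (show 0 < S by linarith) (q + 1)]
  obtain ⟨s, hs, hcov⟩ := exists_finset_coordBox_subset_iUnion_ball (m := q) hh.le
    (show h < 8 * S ^ (q + 1) by linarith) (fun i => complexGrid h (2 ^ (q - (i + 1))))
    (fun i _ hz => exists_mem_complexGrid_norm_sub_le hh (by positivity) (hz.trans (hgrid i)))
    htail
  refine entropyNum_le_of_subset_iUnion_ball (by positivity) s ?_ hcov
  calc s.card ≤ ∏ i : Fin q, (2 ^ (q - (i + 1))) ^ 2 := by
        simpa only [card_complexGrid hh.ne'] using hs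
    _ = 2 ^ (q * (q - 1)) := prod_fin_two_pow_sq q
    _ ≤ 2 ^ (N + 1 - 1) := Nat.pow_le_pow_right two_pos
        ((Nat.mul_le_mul_left q (Nat.sub_le q 1)).trans (by simpa [sq] using Nat.sqrt_le' N))

lemma le_entropyNum_coordBox_pow {ε s : ℝ} (hs : 0 < s) (hsε : s ≤ ε) (hs2 : s ≤ 1 / 2)
    (hε1 : ε ≤ 1) (N : ℕ) :
    s ^ (Nat.sqrt N + 2) / 2 ≤ entropyNum (N + 1) (coordBox (E := ℂ) fun i => ε ^ (i + 1)) := by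
  set q := Nat.sqrt N
  set δ := s ^ (q + 2)
  have hδ : 0 < δ := by positivity
  have hε : 0 ≤ ε := hs.le.trans hsε
  have hgrid (i : Fin (q + 2)) (w : ℂ) (hw : w ∈ complexGrid δ (2 ^ (q + 2 - (i + 1)))) :
      ‖w‖ ≤ ε ^ ((i : ℕ) + 1) := by
    calc ‖w‖ ≤ ((2 ^ (q + 2 - (i + 1)) : ℕ) : ℝ) * δ := norm_le_of_mem_complexGrid hδ.le hw
      _ ≤ s ^ ((i : ℕ) + 1) := by exact_mod_cast two_pow_mul_pow_le hs.le hs2 i.isLt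
      _ ≤ ε ^ ((i : ℕ) + 1) := pow_le_pow_left₀ hs.le hsε _
  obtain ⟨P, hcard, hPK, hsep⟩ := exists_finset_subset_coordBox_pairwise_le_dist
    (a := fun i => ε ^ (i + 1)) _ hgrid (fun i => complexGrid_pairwise_le_norm_sub hδ.le _)
    (fun i _ => by positivity)
  refine le_entropyNum_of_pairwise_le_dist (isBounded_coordBox fun i => pow_le_one₀ hε hε1)
    P hPK ?_ hsep
  rw [hcard]
  simp_rw [card_complexGrid hδ.ne']
  rw [prod_fin_two_pow_sq, Nat.add_sub_cancel]
  refine Nat.pow_lt_pow_right one_lt_two ((Nat.lt_succ_sqrt' N).trans_le ?_)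
  rw [sq]; exact Nat.mul_le_mul_right _ (by omega)

open ZeroAtInfty in
/-- Entropy numbers of `K = {x ∈ c₀ : |xₙ| ≤ εⁿ}` satisfy
`C₁ s^√(n-1) ≤ eₙ(K) ≤ C₂ S^√(n-1)` where `s = min(ε,1/2)`, `S = max(ε,1/2)`;
in particular `(eₙ(K))ₙ ∈ ℓ₁`. (Coordinates are indexed from `0`, so the
`n`-th coordinate of the paper corresponds to index `n - 1`.) -/
theorem stmt5 (ε : ℝ) (hε0 : 0 < ε) (hε1 : ε < 1)
    (K : Set C₀(ℕ, ℂ)) (hK : K = {x : C₀(ℕ, ℂ) | ∀ n : ℕ, ‖x n‖ ≤ ε ^ (n + 1)}) :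
    (∃ C₁ > (0 : ℝ), ∃ C₂ > (0 : ℝ), ∀ n : ℕ, 1 ≤ n →
      C₁ * (min ε (1 / 2)) ^ (Real.sqrt (n - 1)) ≤ entropyNum n K ∧
      entropyNum n K ≤ C₂ * (max ε (1 / 2)) ^ (Real.sqrt (n - 1))) ∧
    Summable (fun n : ℕ => entropyNum n K) := by
  obtain rfl : K = coordBox fun i => ε ^ (i + 1) := hK
  set s := min ε (1 / 2)
  set S := max ε (1 / 2)
  have hs : 0 < s := lt_min hε0 one_half_pos
  have hS1 : S < 1 := max_lt hε1 one_half_lt_one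
  have hupper (N : ℕ) :
      entropyNum (N + 1) (coordBox (E := ℂ) fun i => ε ^ (i + 1)) ≤ 8 * S ^ √(N : ℝ) :=
    (entropyNum_coordBox_pow_le hε0.le (le_max_left _ _) (le_max_right _ _) hS1.le N).trans
      (by gcongr; exact pow_natSqrt_succ_le_rpow_sqrt (by positivity) hS1.le N)
  have hlower (N : ℕ) :
      s ^ 2 / 2 * s ^ √(N : ℝ) ≤ entropyNum (N + 1) (coordBox (E := ℂ) fun i => ε ^ (i + 1)) := by
    refine le_trans ?_ (le_entropyNum_coordBox_pow hs (min_le_left _ _) (min_le_right _ _) hε1.le N)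
    have := rpow_sqrt_le_pow_natSqrt hs.le ((min_le_right _ _).trans one_half_lt_one.le) N
    rw [pow_add]
    nlinarith [pow_pos hs 2]
  refine ⟨⟨s ^ 2 / 2, by positivity, 8, by norm_num, fun n hn => ?_⟩, ?_⟩
  · obtain ⟨N, rfl⟩ := Nat.exists_eq_add_of_le' hn
    simpa using And.intro (hlower N) (hupper N)
  · exact (summable_nat_add_iff 1).1 (Summable.of_nonneg_of_le (fun _ => entropyNum_nonneg _ _)
      hupper ((summable_rpow_sqrt (by positivity) hS1).mul_left 8))
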